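/- arXiv:0903.1793 — 2 statements merged into one kernel-verified Lean document; each statement's English description precedes it below -/
import Mathlib

section
/- Let ε and ε' be two continuous controls on [0,T]. Let ψ̃, ψ̂ be the solutions of the Schrödinger equation with control ε and Hermitian dipoles μ̃, μ̂ respectively, and ψ̃', ψ̂' the solutions with control ε' and dipoles μ̃, μ̂ respectively, all with the same initial state ψ₀. Let χ̃ solve i χ̃'(t) = (H + ε(t) μ̃) χ̃(t) and χ̂ solve i χ̂'(t) = (H + ε(t) μ̂) χ̂(t), both with terminal condition χ̃(T) = χ̂(T) = O_{ψ₁}(ψ̃(T) − ψ̂(T)). Set δψ(T) = ψ̃(T) − ψ̂(T) and δψ'(T) = ψ̃'(T) − ψ̂'(T). Then J(ε') − J(ε) = ⟨δψ'(T) − δψ(T), O_{ψ₁}(δψ'(T) − δψ(T))⟩ + ∫₀ᵀ (ε'(t) − ε(t)) · ( 2 Im⟨χ̃(t), μ̃ ψ̃'(t)⟩ − 2 Im⟨χ̂(t), μ̂ ψ̂'(t)⟩ − β (ε'(t) + ε(t)) ) dt. -/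
noncomputable section

open Matrix

/-- `ψ` solves the bilinear Schrödinger equation
`i ψ'(t) = (H + ε(t) μ) ψ(t)` on `[0, T]` with initial state `ψ₀`. -/
def IsSchrodSol {n : ℕ} (H μ : Matrix (Fin n) (Fin n) ℂ) (ε : ℝ → ℝ)
    (ψ₀ : EuclideanSpace ℂ (Fin n)) (T : ℝ) (ψ : ℝ → EuclideanSpace ℂ (Fin n)) : Prop :=
  ψ 0 = ψ₀ ∧ ∀ t ∈ Set.Icc (0 : ℝ) T,
    HasDerivAt ψ ((-Complex.I) • (Matrix.toEuclideanLin (H + (ε t : ℂ) • μ) (ψ t))) t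

/-- `χ` solves the adjoint equation `i χ'(t) = (H + ε(t) μ) χ(t)` on `[0, T]`
with terminal state `χ(T) = χT`. -/
def IsSchrodAdjSol {n : ℕ} (H μ : Matrix (Fin n) (Fin n) ℂ) (ε : ℝ → ℝ)
    (χT : EuclideanSpace ℂ (Fin n)) (T : ℝ) (χ : ℝ → EuclideanSpace ℂ (Fin n)) : Prop :=
  χ T = χT ∧ ∀ t ∈ Set.Icc (0 : ℝ) T,
    HasDerivAt χ ((-Complex.I) • (Matrix.toEuclideanLin (H + (ε t : ℂ) • μ) (χ t))) t

/-- The rank-one observable `O_{ψ₁} : x ↦ ⟨ψ₁, x⟩ ψ₁`. -/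
def rankOne {n : ℕ} (ψ₁ x : EuclideanSpace ℂ (Fin n)) : EuclideanSpace ℂ (Fin n) :=
  (inner ℂ ψ₁ x : ℂ) • ψ₁

/-- The selectivity functional
`J(ε) = ⟨ψ̃(T) − ψ̂(T), O_{ψ₁}(ψ̃(T) − ψ̂(T))⟩ − β ∫₀ᵀ ε(t)² dt`. -/
def Jfun {n : ℕ} (T β : ℝ) (ψ₁ : EuclideanSpace ℂ (Fin n)) (ε : ℝ → ℝ)
    (ψt ψh : ℝ → EuclideanSpace ℂ (Fin n)) : ℝ :=
  (inner ℂ (ψt T - ψh T) (rankOne ψ₁ (ψt T - ψh T)) : ℂ).re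
    - β * ∫ t in (0:ℝ)..T, (ε t) ^ 2

/-!
For a Hermitian generator, pairing an adjoint solution `χ` (control `ε`) with the difference of two
forward solutions `ψ, ψ'` (controls `ε, ε'`, same initial state) gives
`d/dt Re⟨χ, ψ' − ψ⟩ = (ε' − ε) Im⟨χ, μ ψ'⟩`, the `H + ε μ` parts cancelling by symmetry; integrating
over `[0, T]` yields `Re⟨χ(T), ψ'(T) − ψ(T)⟩`. As `O_{ψ₁}` is symmetric, the quadratic part of `J`
expands exactly: `Q(δψ') − Q(δψ) = Q(δψ' − δψ) + 2 Re⟨O δψ, δψ' − δψ⟩`, and with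
`χ̃(T) = χ̂(T) = O δψ(T)` the cross term is the difference of the integrated identities for `μ̃`, `μ̂`.
-/

section InnerProductSpace

variable {E : Type*} [NormedAddCommGroup E] [InnerProductSpace ℂ E]

theorem LinearMap.IsSymmetric.re_inner_map_self_sub_re_inner_map_self {O : E →ₗ[ℂ] E}
    (hO : O.IsSymmetric) (a b : E) :
    (inner ℂ a (O a) : ℂ).re - (inner ℂ b (O b) : ℂ).re
      = (inner ℂ (a - b) (O (a - b)) : ℂ).re + 2 * (inner ℂ (O b) (a - b) : ℂ).re := by
  have hcross : (inner ℂ b (O (a - b)) : ℂ).re = (inner ℂ (O b) (a - b) : ℂ).re := by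
    rw [hO]
  have hcross' : (inner ℂ (a - b) (O b) : ℂ).re = (inner ℂ (O b) (a - b) : ℂ).re := by
    rw [← inner_conj_symm, Complex.conj_re]
  have hsplit : inner ℂ a (O a) = inner ℂ (a - b) (O (a - b)) + inner ℂ b (O (a - b))
      + inner ℂ (a - b) (O b) + (inner ℂ b (O b) : ℂ) := by
    simp only [map_sub, inner_sub_left, inner_sub_right]
    ring
  rw [hsplit]
  simp only [Complex.add_re, hcross, hcross']
  ring

variable [NormedSpace ℝ E]

theorem hasDerivAt_inner_sub_of_isSymmetric {A B : E →ₗ[ℂ] E} (hA : A.IsSymmetric)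
    {χ ψ φ : ℝ → E} {t : ℝ}
    (hχ : HasDerivAt χ (-Complex.I • A (χ t)) t) (hψ : HasDerivAt ψ (-Complex.I • A (ψ t)) t)
    (hφ : HasDerivAt φ (-Complex.I • B (φ t)) t) :
    HasDerivAt (fun s => (inner ℂ (χ s) (φ s - ψ s) : ℂ))
      (-Complex.I * inner ℂ (χ t) ((B - A) (φ t))) t := by
  refine (hχ.inner ℂ (hφ.sub hψ)).congr_deriv ?_
  simp only [Pi.sub_apply, inner_smul_left, inner_smul_right, inner_sub_right,
    LinearMap.sub_apply, hA (χ t), map_neg, Complex.conj_I]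
  ring

end InnerProductSpace

theorem Matrix.toEuclideanLin_add_smul_sub {n : ℕ} (H μ : Matrix (Fin n) (Fin n) ℂ) (a b : ℝ) :
    toEuclideanLin (H + (a : ℂ) • μ) - toEuclideanLin (H + (b : ℂ) • μ)
      = ((a - b : ℝ) : ℂ) • toEuclideanLin μ := by
  simp only [map_add, map_smul, Complex.ofReal_sub, sub_smul]
  abel

theorem re_inner_rankOne_self_sub {n : ℕ} (ψ₁ a b : EuclideanSpace ℂ (Fin n)) :
    (inner ℂ a (rankOne ψ₁ a) : ℂ).re - (inner ℂ b (rankOne ψ₁ b) : ℂ).re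
      = (inner ℂ (a - b) (rankOne ψ₁ (a - b)) : ℂ).re
        + 2 * (inner ℂ (rankOne ψ₁ b) (a - b) : ℂ).re :=
  (InnerProductSpace.isSymmetric_rankOne_self ψ₁).re_inner_map_self_sub_re_inner_map_self a b

section Schrodinger

variable {n : ℕ} {H μ : Matrix (Fin n) (Fin n) ℂ} {ε ε' : ℝ → ℝ} {T : ℝ}
  {ψ₀ χT : EuclideanSpace ℂ (Fin n)} {χ ψ ψ' : ℝ → EuclideanSpace ℂ (Fin n)}

theorem IsSchrodSol.continuousOn (h : IsSchrodSol H μ ε ψ₀ T ψ) :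
    ContinuousOn ψ (Set.Icc 0 T) :=
  fun t ht => (h.2 t ht).continuousAt.continuousWithinAt

theorem IsSchrodAdjSol.continuousOn (h : IsSchrodAdjSol H μ ε χT T χ) :
    ContinuousOn χ (Set.Icc 0 T) :=
  fun t ht => (h.2 t ht).continuousAt.continuousWithinAt

theorem hasDerivAt_re_inner_sub_of_control (hH : H.IsHermitian) (hμ : μ.IsHermitian) {t : ℝ}
    (hχ : HasDerivAt χ (-Complex.I • toEuclideanLin (H + (ε t : ℂ) • μ) (χ t)) t)
    (hψ : HasDerivAt ψ (-Complex.I • toEuclideanLin (H + (ε t : ℂ) • μ) (ψ t)) t)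
    (hψ' : HasDerivAt ψ' (-Complex.I • toEuclideanLin (H + (ε' t : ℂ) • μ) (ψ' t)) t) :
    HasDerivAt (fun s => (inner ℂ (χ s) (ψ' s - ψ s) : ℂ).re)
      ((ε' t - ε t) * (inner ℂ (χ t) (toEuclideanLin μ (ψ' t)) : ℂ).im) t := by
  have hsymm : (toEuclideanLin (H + (ε t : ℂ) • μ)).IsSymmetric :=
    isSymmetric_toEuclideanLin_iff.mpr (hH.add (hμ.smul (Complex.conj_ofReal _)))
  have h := hasDerivAt_inner_sub_of_isSymmetric hsymm hχ hψ hψ'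
  rw [toEuclideanLin_add_smul_sub] at h
  refine (Complex.reCLM.hasFDerivAt.comp_hasDerivAt t h).congr_deriv ?_
  simp [Complex.mul_re]

variable (μ) in
theorem intervalIntegrable_control_variation (hT : 0 ≤ T) (hε : Continuous ε)
    (hε' : Continuous ε') (hχ : ContinuousOn χ (Set.Icc 0 T))
    (hψ' : ContinuousOn ψ' (Set.Icc 0 T)) :
    IntervalIntegrable
      (fun t => (ε' t - ε t) * (inner ℂ (χ t) (toEuclideanLin μ (ψ' t)) : ℂ).im)
      MeasureTheory.volume 0 T :=
  ContinuousOn.intervalIntegrable_of_Icc hT <| (hε'.sub hε).continuousOn.mul <|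
    Complex.continuous_im.comp_continuousOn <| hχ.inner <|
      (LinearMap.continuous_of_finiteDimensional _).comp_continuousOn hψ'

theorem integral_control_variation (hH : H.IsHermitian) (hμ : μ.IsHermitian) (hT : 0 ≤ T)
    (hε : Continuous ε) (hε' : Continuous ε')
    (hψ : IsSchrodSol H μ ε ψ₀ T ψ) (hψ' : IsSchrodSol H μ ε' ψ₀ T ψ')
    (hχ : IsSchrodAdjSol H μ ε χT T χ) :
    ∫ t in (0 : ℝ)..T, (ε' t - ε t) * (inner ℂ (χ t) (toEuclideanLin μ (ψ' t)) : ℂ).im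
      = (inner ℂ χT (ψ' T - ψ T) : ℂ).re := by
  have hderiv : ∀ t ∈ Set.uIcc 0 T, HasDerivAt (fun s => (inner ℂ (χ s) (ψ' s - ψ s) : ℂ).re)
      ((ε' t - ε t) * (inner ℂ (χ t) (toEuclideanLin μ (ψ' t)) : ℂ).im) t := by
    intro t ht
    rw [Set.uIcc_of_le hT] at ht
    exact hasDerivAt_re_inner_sub_of_control hH hμ (hχ.2 t ht) (hψ.2 t ht) (hψ'.2 t ht)
  rw [intervalIntegral.integral_eq_sub_of_hasDerivAt hderiv
    (intervalIntegrable_control_variation μ hT hε hε' hχ.continuousOn hψ'.continuousOn),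
    hχ.1, hψ.1, hψ'.1, sub_self, inner_zero_right, Complex.zero_re, sub_zero]

end Schrodinger

theorem variation_identity_general {n : ℕ} (T β : ℝ) (hT : 0 < T)
    (H : Matrix (Fin n) (Fin n) ℂ) (hH : H.IsHermitian)
    (ψ₀ ψ₁ : EuclideanSpace ℂ (Fin n))
    (μt μh : Matrix (Fin n) (Fin n) ℂ) (hμt : μt.IsHermitian) (hμh : μh.IsHermitian)
    (ε ε' : ℝ → ℝ) (hε : Continuous ε) (hε' : Continuous ε')
    (ψt ψh ψt' ψh' : ℝ → EuclideanSpace ℂ (Fin n))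
    (hψt : IsSchrodSol H μt ε ψ₀ T ψt) (hψh : IsSchrodSol H μh ε ψ₀ T ψh)
    (hψt' : IsSchrodSol H μt ε' ψ₀ T ψt') (hψh' : IsSchrodSol H μh ε' ψ₀ T ψh')
    (χt χh : ℝ → EuclideanSpace ℂ (Fin n))
    (hχt : IsSchrodAdjSol H μt ε (rankOne ψ₁ (ψt T - ψh T)) T χt)
    (hχh : IsSchrodAdjSol H μh ε (rankOne ψ₁ (ψt T - ψh T)) T χh) :
    Jfun T β ψ₁ ε' ψt' ψh' - Jfun T β ψ₁ ε ψt ψh =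
      (inner ℂ ((ψt' T - ψh' T) - (ψt T - ψh T))
        (rankOne ψ₁ ((ψt' T - ψh' T) - (ψt T - ψh T))) : ℂ).re
      + ∫ t in (0:ℝ)..T, (ε' t - ε t) *
          (2 * (inner ℂ (χt t) (Matrix.toEuclideanLin μt (ψt' t)) : ℂ).im
           - 2 * (inner ℂ (χh t) (Matrix.toEuclideanLin μh (ψh' t)) : ℂ).im
           - β * (ε' t + ε t)) := by
  have hIt := intervalIntegrable_control_variation μt hT.le hε hε' hχt.continuousOn
    hψt'.continuousOn
  have hIh := intervalIntegrable_control_variation μh hT.le hε hε' hχh.continuousOn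
    hψh'.continuousOn
  have hsplit : ∫ t in (0:ℝ)..T, (ε' t - ε t) *
          (2 * (inner ℂ (χt t) (Matrix.toEuclideanLin μt (ψt' t)) : ℂ).im
           - 2 * (inner ℂ (χh t) (Matrix.toEuclideanLin μh (ψh' t)) : ℂ).im
           - β * (ε' t + ε t))
      = 2 * (∫ t in (0:ℝ)..T, (ε' t - ε t) * (inner ℂ (χt t) (toEuclideanLin μt (ψt' t))).im)
        - 2 * (∫ t in (0:ℝ)..T, (ε' t - ε t) * (inner ℂ (χh t) (toEuclideanLin μh (ψh' t))).im)
        - β * ((∫ t in (0:ℝ)..T, ε' t ^ 2) - ∫ t in (0:ℝ)..T, ε t ^ 2) := by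
    open intervalIntegral in
    rw [← integral_sub (f := fun t => ε' t ^ 2) (g := fun t => ε t ^ 2)
        ((hε'.pow 2).intervalIntegrable 0 T) ((hε.pow 2).intervalIntegrable 0 T),
      ← integral_const_mul, ← integral_const_mul, ← integral_const_mul,
      ← integral_sub (hIt.const_mul 2) (hIh.const_mul 2),
      ← integral_sub (g := fun t => β * (ε' t ^ 2 - ε t ^ 2))
        ((hIt.const_mul 2).sub (hIh.const_mul 2)) ((by fun_prop : Continuous _).intervalIntegrable 0 T)]
    exact integral_congr fun t _ => by ring
  have hcross : (inner ℂ (rankOne ψ₁ (ψt T - ψh T)) ((ψt' T - ψh' T) - (ψt T - ψh T)) : ℂ).re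
      = (inner ℂ (rankOne ψ₁ (ψt T - ψh T)) (ψt' T - ψt T) : ℂ).re
        - (inner ℂ (rankOne ψ₁ (ψt T - ψh T)) (ψh' T - ψh T) : ℂ).re := by
    rw [← Complex.sub_re, ← inner_sub_right, sub_sub_sub_comm]
  rw [Jfun, Jfun, hsplit, integral_control_variation hH hμt hT.le hε hε' hψt hψt' hχt,
    integral_control_variation hH hμh hT.le hε hε' hψh hψh' hχh]
  linarith [re_inner_rankOne_self_sub ψ₁ (ψt' T - ψh' T) (ψt T - ψh T)]

/-- the variation identity for the selectivity functional. -/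
theorem variation_identity {n : ℕ} (T β : ℝ) (hT : 0 < T) (hβ : 0 < β)
    (H : Matrix (Fin n) (Fin n) ℂ) (hH : H.IsHermitian)
    (ψ₀ ψ₁ : EuclideanSpace ℂ (Fin n)) (hψ₀ : ‖ψ₀‖ = 1) (hψ₁ : ‖ψ₁‖ = 1)
    (μt μh : Matrix (Fin n) (Fin n) ℂ) (hμt : μt.IsHermitian) (hμh : μh.IsHermitian)
    (ε ε' : ℝ → ℝ) (hε : Continuous ε) (hε' : Continuous ε')
    (ψt ψh ψt' ψh' : ℝ → EuclideanSpace ℂ (Fin n))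
    (hψt : IsSchrodSol H μt ε ψ₀ T ψt) (hψh : IsSchrodSol H μh ε ψ₀ T ψh)
    (hψt' : IsSchrodSol H μt ε' ψ₀ T ψt') (hψh' : IsSchrodSol H μh ε' ψ₀ T ψh')
    (χt χh : ℝ → EuclideanSpace ℂ (Fin n))
    (hχt : IsSchrodAdjSol H μt ε (rankOne ψ₁ (ψt T - ψh T)) T χt)
    (hχh : IsSchrodAdjSol H μh ε (rankOne ψ₁ (ψt T - ψh T)) T χh) :
    Jfun T β ψ₁ ε' ψt' ψh' - Jfun T β ψ₁ ε ψt ψh =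
      (inner ℂ ((ψt' T - ψh' T) - (ψt T - ψh T))
        (rankOne ψ₁ ((ψt' T - ψh' T) - (ψt T - ψh T))) : ℂ).re
      + ∫ t in (0:ℝ)..T, (ε' t - ε t) *
          (2 * (inner ℂ (χt t) (Matrix.toEuclideanLin μt (ψt' t)) : ℂ).im
           - 2 * (inner ℂ (χh t) (Matrix.toEuclideanLin μh (ψh' t)) : ℂ).im
           - β * (ε' t + ε t)) :=
  variation_identity_general T β hT H hH ψ₀ ψ₁ μt μh hμt hμh ε ε' hε hε' ψt ψh ψt' ψh' hψt hψh hψt'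
    hψh' χt χh hχt hχh
end
end

section
/- In the discrete setting, if for every j ∈ {0,…,M−1} the summand 2 Re⟨χ̃_{j+1}, (Ũ_j(ε') − Ũ_j(ε)) ψ̃'_j⟩ − 2 Re⟨χ̂_{j+1}, (Û_j(ε') − Û_j(ε)) ψ̂'_j⟩ − β Δt ((ε'_j)² − (ε_j)²) is nonnegative, then J_{Δt}(ε') ≥ J_{Δt}(ε); i.e. any discrete update whose per-time-step contributions are nonnegative does not decrease the time-discretized selectivity functional. -/
noncomputable section

open Matrix

/-- The Strang splitting propagator
`U = exp(i H Δt/2) · exp(i ε_j μ Δt) · exp(i H Δt/2)`. -/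
def strangU {n : ℕ} (H μ : Matrix (Fin n) (Fin n) ℂ) (Δt εj : ℝ) :
    Matrix (Fin n) (Fin n) ℂ :=
  NormedSpace.exp ((Complex.I * ((Δt : ℂ) / 2)) • H) *
  NormedSpace.exp ((Complex.I * (εj : ℂ) * (Δt : ℂ)) • μ) *
  NormedSpace.exp ((Complex.I * ((Δt : ℂ) / 2)) • H)

/-- The time-discretized selectivity functional
`J_{Δt}(ε) = ⟨ψ̃_M − ψ̂_M, O_{ψ₁}(ψ̃_M − ψ̂_M)⟩ − β Δt Σ_{j<M} ε_j²`,
expressed in terms of the discrete trajectories `ψ̃, ψ̂`. -/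
def Jdisc {n : ℕ} (M : ℕ) (Δt β : ℝ) (ψ₁ : EuclideanSpace ℂ (Fin n)) (ε : ℕ → ℝ)
    (ψt ψh : ℕ → EuclideanSpace ℂ (Fin n)) : ℝ :=
  (inner ℂ (ψt M - ψh M) (rankOne ψ₁ (ψt M - ψh M)) : ℂ).re
    - β * Δt * ∑ j ∈ Finset.range M, (ε j) ^ 2

/-!
The Strang propagators are unitary, being products of exponentials of skew-Hermitian matrices.
Because the adjoint state is transported by the same unitary propagator as the state, the pairing
`⟨χ_j, ψ'_j - ψ_j⟩` changes from step `j` to `j + 1` by exactly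
`⟨χ_{j+1}, (U_j(ε') - U_j(ε)) ψ'_j⟩`, and it vanishes at `j = 0`. Summing, and subtracting the
same identity for the hat trajectories, expresses `⟨O d, d' - d⟩` (with `d = ψ̃_M - ψ̂_M`,
`d' = ψ̃'_M - ψ̂'_M`) through the step terms, while twice its real part is a lower bound for
`⟨d', O d'⟩ - ⟨d, O d⟩ = |⟨ψ₁, d'⟩|² - |⟨ψ₁, d⟩|²`.
-/

theorem Matrix.exp_mem_unitaryGroup_of_mem_skewAdjoint {m 𝕜 : Type*} [Fintype m] [DecidableEq m]
    [RCLike 𝕜] {A : Matrix m m 𝕜} (hA : A ∈ skewAdjoint (Matrix m m 𝕜)) :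
    NormedSpace.exp A ∈ unitaryGroup m 𝕜 := by
  -- `exp` only sees the topology, so we may borrow the C⋆-algebra structure of the L² operator norm.
  open scoped Matrix.Norms.L2Operator in
  let _ : NormedAlgebra ℚ (Matrix m m 𝕜) := NormedAlgebra.restrictScalars ℚ 𝕜 _
  exact NormedSpace.exp_mem_unitary_of_mem_skewAdjoint hA

theorem Matrix.IsHermitian.exp_smul_mem_unitaryGroup {m 𝕜 : Type*} [Fintype m] [DecidableEq m]
    [RCLike 𝕜] {A : Matrix m m 𝕜} (hA : A.IsHermitian) {c : 𝕜} (hc : c ∈ skewAdjoint 𝕜) :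
    NormedSpace.exp (c • A) ∈ unitaryGroup m 𝕜 :=
  exp_mem_unitaryGroup_of_mem_skewAdjoint (hA.isSelfAdjoint.smul_mem_skewAdjoint hc)

theorem strangU_mem_unitaryGroup {n : ℕ} {H μ : Matrix (Fin n) (Fin n) ℂ} (hH : H.IsHermitian)
    (hμ : μ.IsHermitian) (Δt e : ℝ) : strangU H μ Δt e ∈ unitaryGroup (Fin n) ℂ := by
  have hc (t : ℝ) : Complex.I * t ∈ skewAdjoint ℂ := skewAdjoint.mem_iff.2 (by simp)
  have hH' := hH.exp_smul_mem_unitaryGroup (by simpa using hc (Δt / 2))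
  refine mul_mem (mul_mem hH' (hμ.exp_smul_mem_unitaryGroup ?_)) hH'
  simpa [mul_assoc] using hc (e * Δt)

theorem Matrix.toEuclideanCLM_mem_unitary {m 𝕜 : Type*} [Fintype m] [DecidableEq m]
    [RCLike 𝕜] {U : Matrix m m 𝕜} (hU : U ∈ unitaryGroup m 𝕜) :
    toEuclideanCLM (n := m) (𝕜 := 𝕜) U ∈ unitary (EuclideanSpace 𝕜 m →L[𝕜] EuclideanSpace 𝕜 m) :=
  Unitary.map_mem _ hU

theorem Matrix.inner_toEuclideanLin_of_mem_unitaryGroup {m 𝕜 : Type*} [Fintype m] [DecidableEq m]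
    [RCLike 𝕜] {U : Matrix m m 𝕜} (hU : U ∈ unitaryGroup m 𝕜) (x y : EuclideanSpace 𝕜 m) :
    inner 𝕜 (toEuclideanLin U x) (toEuclideanLin U y) = inner 𝕜 x y :=
  ContinuousLinearMap.inner_map_map_of_mem_unitary (toEuclideanCLM_mem_unitary hU) x y

section Variation

variable {𝕜 E : Type*} [RCLike 𝕜] [NormedAddCommGroup E] [InnerProductSpace 𝕜 E]

theorem inner_sub_sub_eq_sum_inner_sub_apply {M : ℕ} {U U' : ℕ → E →ₗ[𝕜] E} {χ ψ ψ' : ℕ → E}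
    (hU : ∀ j < M, ∀ x y, inner 𝕜 (U j x) (U j y) = inner 𝕜 x y)
    (hψ : ∀ j < M, ψ (j + 1) = U j (ψ j)) (hψ' : ∀ j < M, ψ' (j + 1) = U' j (ψ' j))
    (hχ : ∀ j < M, χ (j + 1) = U j (χ j)) :
    inner 𝕜 (χ M) (ψ' M - ψ M) - inner 𝕜 (χ 0) (ψ' 0 - ψ 0) =
      ∑ j ∈ Finset.range M, inner 𝕜 (χ (j + 1)) ((U' j - U j) (ψ' j)) := by
  rw [← Finset.sum_range_sub (fun j => inner 𝕜 (χ j) (ψ' j - ψ j))]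
  refine Finset.sum_congr rfl fun j hj => ?_
  have hj := Finset.mem_range.mp hj
  rw [hψ j hj, hψ' j hj, hχ j hj, LinearMap.sub_apply]
  simp only [inner_sub_right, hU j hj]
  ring

theorem two_mul_re_inner_sub_le (x y : E) :
    2 * RCLike.re (inner 𝕜 x (y - x)) ≤ ‖y‖ ^ 2 - ‖x‖ ^ 2 := by
  have h := norm_add_sq (𝕜 := 𝕜) x (y - x)
  rw [add_sub_cancel] at h
  linarith [sq_nonneg ‖y - x‖]

end Variation

theorem re_inner_rankOne_self {n : ℕ} (ψ₁ u : EuclideanSpace ℂ (Fin n)) :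
    (inner ℂ u (rankOne ψ₁ u)).re = ‖inner ℂ ψ₁ u‖ ^ 2 := by
  rw [rankOne, inner_smul_right, ← inner_conj_symm u ψ₁, Complex.mul_conj,
    Complex.normSq_eq_norm_sq, Complex.ofReal_re]

theorem two_mul_re_inner_rankOne_sub_le {n : ℕ} (ψ₁ u v : EuclideanSpace ℂ (Fin n)) :
    2 * (inner ℂ (rankOne ψ₁ u) (v - u)).re ≤
      (inner ℂ v (rankOne ψ₁ v)).re - (inner ℂ u (rankOne ψ₁ u)).re := by
  rw [re_inner_rankOne_self, re_inner_rankOne_self, rankOne, inner_smul_left, inner_sub_right]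
  have h := two_mul_re_inner_sub_le (𝕜 := ℂ) (inner ℂ ψ₁ u) (inner ℂ ψ₁ v)
  rwa [RCLike.inner_apply, mul_comm (_ - _)] at h

theorem discrete_monotonicity_general {n : ℕ} (M : ℕ) (Δt β : ℝ)
    (H μt μh : Matrix (Fin n) (Fin n) ℂ) (hH : H.IsHermitian)
    (hμt : μt.IsHermitian) (hμh : μh.IsHermitian)
    (ψ₀ ψ₁ : EuclideanSpace ℂ (Fin n))
    (ε ε' : ℕ → ℝ)
    (ψt ψh ψt' ψh' χt χh : ℕ → EuclideanSpace ℂ (Fin n))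
    (hψt0 : ψt 0 = ψ₀) (hψh0 : ψh 0 = ψ₀) (hψt'0 : ψt' 0 = ψ₀) (hψh'0 : ψh' 0 = ψ₀)
    (hψt : ∀ j < M, ψt (j + 1) = Matrix.toEuclideanLin (strangU H μt Δt (ε j)) (ψt j))
    (hψh : ∀ j < M, ψh (j + 1) = Matrix.toEuclideanLin (strangU H μh Δt (ε j)) (ψh j))
    (hψt' : ∀ j < M, ψt' (j + 1) = Matrix.toEuclideanLin (strangU H μt Δt (ε' j)) (ψt' j))
    (hψh' : ∀ j < M, ψh' (j + 1) = Matrix.toEuclideanLin (strangU H μh Δt (ε' j)) (ψh' j))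
    (hχt : ∀ j < M, χt (j + 1) = Matrix.toEuclideanLin (strangU H μt Δt (ε j)) (χt j))
    (hχh : ∀ j < M, χh (j + 1) = Matrix.toEuclideanLin (strangU H μh Δt (ε j)) (χh j))
    (hχtM : χt M = rankOne ψ₁ (ψt M - ψh M))
    (hχhM : χh M = rankOne ψ₁ (ψt M - ψh M))
    (hnonneg : ∀ j < M,
      0 ≤ (2 * (inner ℂ (χt (j + 1))
              (Matrix.toEuclideanLin (strangU H μt Δt (ε' j) - strangU H μt Δt (ε j))
                (ψt' j)) : ℂ).re
           - 2 * (inner ℂ (χh (j + 1))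
              (Matrix.toEuclideanLin (strangU H μh Δt (ε' j) - strangU H μh Δt (ε j))
                (ψh' j)) : ℂ).re
           - β * Δt * ((ε' j) ^ 2 - (ε j) ^ 2))) :
    Jdisc M Δt β ψ₁ ε ψt ψh ≤ Jdisc M Δt β ψ₁ ε' ψt' ψh' := by
  have hvarT := inner_sub_sub_eq_sum_inner_sub_apply
    (fun j _ => inner_toEuclideanLin_of_mem_unitaryGroup (strangU_mem_unitaryGroup hH hμt Δt (ε j)))
    hψt hψt' hχt
  have hvarH := inner_sub_sub_eq_sum_inner_sub_apply
    (fun j _ => inner_toEuclideanLin_of_mem_unitaryGroup (strangU_mem_unitaryGroup hH hμh Δt (ε j)))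
    hψh hψh' hχh
  rw [hψt0, hψt'0, sub_self, inner_zero_right, sub_zero, hχtM] at hvarT
  rw [hψh0, hψh'0, sub_self, inner_zero_right, sub_zero, hχhM] at hvarH
  have hboundary : inner ℂ (rankOne ψ₁ (ψt M - ψh M)) ((ψt' M - ψh' M) - (ψt M - ψh M)) =
      ∑ j ∈ Finset.range M, inner ℂ (χt (j + 1))
          (Matrix.toEuclideanLin (strangU H μt Δt (ε' j) - strangU H μt Δt (ε j)) (ψt' j))
        - ∑ j ∈ Finset.range M, inner ℂ (χh (j + 1))
          (Matrix.toEuclideanLin (strangU H μh Δt (ε' j) - strangU H μh Δt (ε j)) (ψh' j)) := by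
    simp only [map_sub, ← hvarT, ← hvarH, ← inner_sub_right]
    congr 1
    abel
  have hsum := Finset.sum_nonneg fun j hj => hnonneg j (Finset.mem_range.mp hj)
  have hconvex := two_mul_re_inner_rankOne_sub_le ψ₁ (ψt M - ψh M) (ψt' M - ψh' M)
  rw [hboundary] at hconvex
  simp only [Finset.sum_sub_distrib, ← Finset.mul_sum, ← Complex.re_sum, Complex.sub_re]
    at hsum hconvex
  unfold Jdisc
  linarith

/-- if every per-time-step contribution in the discrete variation
identity is nonnegative, then `J_{Δt}(ε') ≥ J_{Δt}(ε)`. -/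
theorem discrete_monotonicity {n : ℕ} (M : ℕ) (Δt T β : ℝ) (hΔt : 0 < Δt)
    (hMT : M * Δt = T) (hβ : 0 < β)
    (H μt μh : Matrix (Fin n) (Fin n) ℂ) (hH : H.IsHermitian)
    (hμt : μt.IsHermitian) (hμh : μh.IsHermitian)
    (ψ₀ ψ₁ : EuclideanSpace ℂ (Fin n)) (hψ₀ : ‖ψ₀‖ = 1) (hψ₁ : ‖ψ₁‖ = 1)
    (ε ε' : ℕ → ℝ)
    (ψt ψh ψt' ψh' χt χh : ℕ → EuclideanSpace ℂ (Fin n))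
    (hψt0 : ψt 0 = ψ₀) (hψh0 : ψh 0 = ψ₀) (hψt'0 : ψt' 0 = ψ₀) (hψh'0 : ψh' 0 = ψ₀)
    (hψt : ∀ j < M, ψt (j + 1) = Matrix.toEuclideanLin (strangU H μt Δt (ε j)) (ψt j))
    (hψh : ∀ j < M, ψh (j + 1) = Matrix.toEuclideanLin (strangU H μh Δt (ε j)) (ψh j))
    (hψt' : ∀ j < M, ψt' (j + 1) = Matrix.toEuclideanLin (strangU H μt Δt (ε' j)) (ψt' j))
    (hψh' : ∀ j < M, ψh' (j + 1) = Matrix.toEuclideanLin (strangU H μh Δt (ε' j)) (ψh' j))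
    (hχt : ∀ j < M, χt (j + 1) = Matrix.toEuclideanLin (strangU H μt Δt (ε j)) (χt j))
    (hχh : ∀ j < M, χh (j + 1) = Matrix.toEuclideanLin (strangU H μh Δt (ε j)) (χh j))
    (hχtM : χt M = rankOne ψ₁ (ψt M - ψh M))
    (hχhM : χh M = rankOne ψ₁ (ψt M - ψh M))
    (hnonneg : ∀ j < M,
      0 ≤ (2 * (inner ℂ (χt (j + 1))
              (Matrix.toEuclideanLin (strangU H μt Δt (ε' j) - strangU H μt Δt (ε j))
                (ψt' j)) : ℂ).re
           - 2 * (inner ℂ (χh (j + 1))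
              (Matrix.toEuclideanLin (strangU H μh Δt (ε' j) - strangU H μh Δt (ε j))
                (ψh' j)) : ℂ).re
           - β * Δt * ((ε' j) ^ 2 - (ε j) ^ 2))) :
    Jdisc M Δt β ψ₁ ε ψt ψh ≤ Jdisc M Δt β ψ₁ ε' ψt' ψh' :=
  discrete_monotonicity_general M Δt β H μt μh hH hμt hμh ψ₀ ψ₁ ε ε' ψt ψh ψt' ψh' χt χh hψt0 hψh0
    hψt'0 hψh'0 hψt hψh hψt' hψh' hχt hχh hχtM hχhM hnonneg
end
end
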